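/- arXiv:2308.03144 — 2 statements merged into one kernel-verified Lean document; each statement's English description precedes it below -/
import Mathlib

section
/- For 0 < l ≤ 2·arcsinh(1) and ρ(s) = (l/(2π))/cos(l s/(2π)) with X(l) = π²/l − (2π/l)·arcsin(sinh(l/2)/sinh 1), the derivative of log ρ satisfies |d/ds (log ρ(s))| ≤ e/(2π) for all s ∈ [−X(l), X(l)]. -/
/-!
Writing `k = l/(2π)` and `θ = k s`, the logarithmic derivative of `ρ = k / cos θ` is
`k tan θ = ρ sin θ`, so it is bounded by `ρ`. On the collar `|θ| ≤ π/2 - arcsin r` with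
`r = sinh(l/2) / sinh 1`, hence `cos θ ≥ r` and `ρ ≤ k / r = (l sinh 1 / sinh(l/2)) / (2π)`.
Finally `l ≤ 2 sinh(l/2)` and `2 sinh 1 = e - e⁻¹ ≤ e`.
-/

open Real

lemma hasDerivAt_log_div_cos {c k x : ℝ} (hc : c ≠ 0) (hx : cos (k * x) ≠ 0) :
    HasDerivAt (fun s => log (c / cos (k * s))) (k * sin (k * x) / cos (k * x)) x := by
  have hcos : HasDerivAt (fun s => cos (k * s)) (-sin (k * x) * k) x :=
    (hasDerivAt_cos (k * x)).comp x ((hasDerivAt_id x).const_mul k |>.congr_deriv (mul_one k))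
  refine (((hasDerivAt_const x c).div hcos hx).log (div_ne_zero hc hx)).congr_deriv ?_
  simp only [Pi.div_apply]
  field_simp
  ring

lemma le_cos_of_abs_le_pi_div_two_sub_arcsin {r θ : ℝ} (hr₁ : -1 ≤ r) (hr₂ : r ≤ 1)
    (hθ : |θ| ≤ π / 2 - arcsin r) : r ≤ cos θ := by
  have hmono : cos (π / 2 - arcsin r) ≤ cos |θ| :=
    cos_le_cos_of_nonneg_of_le_pi (abs_nonneg θ) (by linarith [neg_pi_div_two_le_arcsin r]) hθ
  rwa [cos_pi_div_two_sub, sin_arcsin hr₁ hr₂, cos_abs] at hmono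

lemma sinh_half_div_sinh_one_le_one {l : ℝ} (hl : l ≤ 2 * arsinh 1) :
    sinh (l / 2) / sinh 1 ≤ 1 := by
  have hsinh_half : sinh (l / 2) ≤ 1 := by
    simpa using sinh_le_sinh.mpr (show l / 2 ≤ arsinh 1 by linarith)
  have hsinh_one : (1 : ℝ) ≤ sinh 1 := self_le_sinh_iff.mpr zero_le_one
  rw [div_le_one (by linarith)]
  linarith

lemma mul_sinh_one_div_sinh_half_le_exp_one {l : ℝ} (hl : 0 < l) :
    l * sinh 1 / sinh (l / 2) ≤ exp 1 := by
  have hl_le : l ≤ 2 * sinh (l / 2) := by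
    linarith [self_le_sinh_iff.mpr (show 0 ≤ l / 2 by linarith)]
  have hsinh_one : 2 * sinh 1 ≤ exp 1 := by
    rw [sinh_eq]
    linarith [exp_pos (-1)]
  rw [div_le_iff₀ (sinh_pos_iff.mpr (by linarith))]
  nlinarith [sinh_pos_iff.mpr (zero_lt_one' ℝ)]

/-- On the collar `[-X(l), X(l)]` the logarithmic derivative of the conformal factor
`ρ(s) = (l/(2π))/cos(l s/(2π))` satisfies `|d/ds log ρ(s)| ≤ e/(2π)`. -/
theorem stmt5 (l : ℝ) (h0 : 0 < l) (h1 : l ≤ 2 * Real.arsinh 1) (s : ℝ)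
    (hs : |s| ≤ π^2/l - (2*π/l) * Real.arcsin (Real.sinh (l/2) / Real.sinh 1)) :
    |deriv (fun s' : ℝ => Real.log ((l/(2*π)) / Real.cos (l*s'/(2*π)))) s|
      ≤ Real.exp 1 / (2*π) := by
  set k := l / (2 * π) with hk
  set r := sinh (l / 2) / sinh 1
  have hk_pos : 0 < k := by positivity
  have hr_pos : 0 < r := div_pos (sinh_pos_iff.mpr (by linarith)) (sinh_pos_iff.mpr one_pos)
  have hθ : |k * s| ≤ π / 2 - arcsin r := by
    calc |k * s| = k * |s| := by rw [abs_mul, abs_of_pos hk_pos]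
      _ ≤ k * (π ^ 2 / l - (2 * π / l) * arcsin r) := by gcongr
      _ = π / 2 - arcsin r := by rw [hk]; field_simp
  have hcos : r ≤ cos (k * s) := le_cos_of_abs_le_pi_div_two_sub_arcsin
    (by linarith) (sinh_half_div_sinh_one_le_one h1) hθ
  have hcos_pos : 0 < cos (k * s) := hr_pos.trans_le hcos
  simp_rw [mul_div_right_comm l _ (2 * π)]
  rw [(hasDerivAt_log_div_cos hk_pos.ne' hcos_pos.ne').deriv, abs_div, abs_mul,
    abs_of_pos hk_pos, abs_of_pos hcos_pos]
  calc k * |sin (k * s)| / cos (k * s) ≤ k / r := by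
        gcongr
        exact mul_le_of_le_one_right hk_pos.le (abs_sin_le_one _)
    _ = l * sinh 1 / sinh (l / 2) / (2 * π) := by simp only [hk, r]; field_simp
    _ ≤ exp 1 / (2 * π) := by gcongr; exact mul_sinh_one_div_sinh_half_le_exp_one h0
end

section
/- For every t < s the average over σ ∈ [0, 2π] of e^{t−s}/|1 − e^{(t−s) − iσ}| equals (e^{t−s}/(1+e^{t−s})) · (2/π) K(k), where K is the complete elliptic integral of the first kind and k² = 4 e^{t−s}/(1+e^{t−s})², and this quantity is bounded above by C · (e^{t−s}/(1+e^{t−s})) · (1 + |log(1 − e^{t−s})|) for a universal constant C. -/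
/-!
Write `a = e^{t-s} ∈ (0, 1)`. Since `|1 - a e^{-iσ}|² = (1 + a)² - 4a cos²(σ/2)`, the half-angle
substitution `ψ = σ/2` and the symmetries of `cos²` on `[0, π]` turn the circle average into the
complete elliptic integral `K(k)`, `k² = 4a/(1+a)²`.

For the bound, let `δ = (1 - a)/(1 + a)` be the complementary modulus, so that
`1 - k² sin² ψ = cos² ψ + δ² sin² ψ ≥ (cos ψ + δ sin ψ)²/2`. Jordan's inequality bounds
`cos ψ + δ sin ψ` below on `[0, π/2]` by the linear function falling from `1` to `δ`, whose
reciprocal integrates to `π log(1/δ) / (2(1 - δ))`; this is `O(1 + log(1/δ))`, and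
`log(1/δ) ≤ log 2 + |log(1 - a)|`.
-/

open Real MeasureTheory intervalIntegral

lemma norm_one_sub_exp_ofReal_sub_I_mul (x σ : ℝ) :
    ‖1 - Complex.exp ((x : ℂ) - Complex.I * σ)‖ = √(1 + exp x ^ 2 - 2 * exp x * cos σ) := by
  rw [Complex.norm_def, Complex.normSq_apply]
  have hre : (1 - Complex.exp ((x : ℂ) - Complex.I * σ)).re = 1 - exp x * cos σ := by
    simp [Complex.exp_re]
  have him : (1 - Complex.exp ((x : ℂ) - Complex.I * σ)).im = exp x * sin σ := by
    simp [Complex.exp_im]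
  rw [hre, him]
  congr 1
  linear_combination exp x ^ 2 * sin_sq_add_cos_sq σ

lemma integral_comp_cos_half_sq {g : ℝ → ℝ} (hg : ContinuousOn g (Set.Icc 0 1)) :
    ∫ σ in (0 : ℝ)..2 * π, g (cos (σ / 2) ^ 2) = 4 * ∫ ψ in (0 : ℝ)..π / 2, g (sin ψ ^ 2) := by
  set f : ℝ → ℝ := fun ψ => g (cos ψ ^ 2)
  have hf : Continuous f := hg.comp_continuous (by fun_prop)
    fun ψ => ⟨sq_nonneg _, cos_sq_le_one ψ⟩
  have hhalf : ∫ σ in (0 : ℝ)..2 * π, f (σ / 2) = 2 * ∫ ψ in (0 : ℝ)..π, f ψ := by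
    rw [integral_comp_div f two_ne_zero]
    norm_num
  have hreflect : ∫ ψ in π / 2..π, f ψ = ∫ ψ in (0 : ℝ)..π / 2, f ψ := by
    have := integral_comp_sub_left (a := 0) (b := π / 2) f π
    rw [show π - π / 2 = π / 2 by ring, sub_zero] at this
    simpa only [f, cos_pi_sub, neg_sq] using this.symm
  have hflip : ∫ ψ in (0 : ℝ)..π / 2, f ψ = ∫ ψ in (0 : ℝ)..π / 2, g (sin ψ ^ 2) := by
    have := integral_comp_sub_left (a := 0) (b := π / 2) f (π / 2)
    rw [sub_self, sub_zero] at this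
    simpa only [f, cos_pi_div_two_sub] using this.symm
  rw [hhalf, ← integral_add_adjacent_intervals (b := π / 2) (hf.intervalIntegrable _ _)
    (hf.intervalIntegrable _ _), hreflect, hflip]
  ring

lemma one_add_sq_sub_two_mul_cos_eq {a : ℝ} (ha : 1 + a ≠ 0) (σ : ℝ) :
    1 + a ^ 2 - 2 * a * cos σ = (1 + a) ^ 2 * (1 - 4 * a / (1 + a) ^ 2 * cos (σ / 2) ^ 2) := by
  have hcos : cos (σ / 2) ^ 2 = 1 / 2 + cos σ / 2 := by rw [cos_sq, mul_div_cancel₀ _ two_ne_zero]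
  field_simp
  rw [hcos]
  ring

lemma integral_div_sqrt_one_add_sq_sub_two_mul_cos {a : ℝ} (ha : 0 ≤ a) (ha1 : a ≠ 1) :
    ∫ σ in (0 : ℝ)..2 * π, a / √(1 + a ^ 2 - 2 * a * cos σ)
      = 4 * (a / (1 + a)) * ∫ ψ in (0 : ℝ)..π / 2, 1 / √(1 - 4 * a / (1 + a) ^ 2 * sin ψ ^ 2) := by
  have h1a : 0 < 1 + a := by linarith
  have hg : ContinuousOn (fun x : ℝ => 1 / √(1 - 4 * a / (1 + a) ^ 2 * x)) (Set.Icc 0 1) := by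
    have hk2 : 4 * a / (1 + a) ^ 2 < 1 := by
      rw [div_lt_one (by positivity)]
      nlinarith [sq_pos_of_ne_zero (sub_ne_zero.2 ha1)]
    have : 0 ≤ 4 * a / (1 + a) ^ 2 := by positivity
    refine continuousOn_const.div (by fun_prop) fun x hx => (sqrt_pos.2 ?_).ne'
    nlinarith [hx.1, hx.2]
  rw [mul_comm 4, mul_assoc, ← integral_comp_cos_half_sq hg, ← intervalIntegral.integral_const_mul]
  refine integral_congr fun σ _ => ?_
  rw [one_add_sq_sub_two_mul_cos_eq h1a.ne', sqrt_mul (by positivity), sqrt_sq h1a.le]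
  field_simp

lemma one_sub_mul_le_cos_add_mul_sin {δ ψ : ℝ} (hδ : 0 ≤ δ) (hψ₀ : 0 ≤ ψ) (hψ : ψ ≤ π / 2) :
    1 - 2 * (1 - δ) / π * ψ ≤ cos ψ + δ * sin ψ := by
  have hcos : 2 / π * (π / 2 - ψ) ≤ cos ψ := by
    simpa only [sin_pi_div_two_sub] using mul_le_sin (sub_nonneg.2 hψ) (by linarith)
  have hsin := mul_le_sin hψ₀ hψ
  have : 1 - 2 * (1 - δ) / π * ψ = 2 / π * (π / 2 - ψ) + δ * (2 / π * ψ) := by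
    field_simp
    ring
  rw [this]
  gcongr

lemma le_one_sub_mul_of_le_pi_div_two {δ ψ : ℝ} (hδ : δ ≤ 1) (hψ : ψ ≤ π / 2) :
    δ ≤ 1 - 2 * (1 - δ) / π * ψ := by
  have hπ := pi_pos
  have hmax : 2 * (1 - δ) / π * (π / 2) = 1 - δ := by field_simp
  have : 2 * (1 - δ) / π * ψ ≤ 2 * (1 - δ) / π * (π / 2) := by
    gcongr
  linarith

lemma add_le_sqrt_two_mul_sqrt_sq_add_sq (x y : ℝ) : x + y ≤ √2 * √(x ^ 2 + y ^ 2) := by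
  rw [← sqrt_mul zero_le_two]
  exact le_sqrt_of_sq_le (by nlinarith [sq_nonneg (x - y)])

lemma one_div_sqrt_cos_sq_add_sq_mul_sin_sq_le {δ ψ : ℝ} (h₀ : 0 < δ) (h₁ : δ ≤ 1) (hψ₀ : 0 ≤ ψ)
    (hψ : ψ ≤ π / 2) :
    1 / √(cos ψ ^ 2 + δ ^ 2 * sin ψ ^ 2) ≤ √2 / (1 - 2 * (1 - δ) / π * ψ) := by
  have hL := h₀.trans_le (le_one_sub_mul_of_le_pi_div_two h₁ hψ)
  have h := (one_sub_mul_le_cos_add_mul_sin h₀.le hψ₀ hψ).trans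
    (add_le_sqrt_two_mul_sqrt_sq_add_sq (cos ψ) (δ * sin ψ))
  rw [mul_pow] at h
  have hS : 0 < √(cos ψ ^ 2 + δ ^ 2 * sin ψ ^ 2) :=
    pos_of_mul_pos_right (hL.trans_le h) (sqrt_nonneg 2)
  rw [div_le_div_iff₀ hS hL]
  linarith

lemma integral_inv_one_sub_mul {m b : ℝ} (hm : m ≠ 0) (hb : 0 < 1 - m * b) :
    ∫ x in (0 : ℝ)..b, (1 - m * x)⁻¹ = m⁻¹ * log (1 - m * b)⁻¹ := by
  rw [integral_comp_sub_mul (fun x => x⁻¹) hm, mul_zero, sub_zero,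
    integral_inv_of_pos hb one_pos, one_div, smul_eq_mul]

lemma log_inv_le_two_mul_one_sub_mul {δ : ℝ} (h₀ : 0 < δ) (h₁ : δ < 1) :
    log δ⁻¹ ≤ 2 * (1 - δ) * (1 + log δ⁻¹) := by
  have hlog : 0 ≤ log δ⁻¹ := log_nonneg (one_le_inv₀ h₀ |>.2 h₁.le)
  rcases le_or_gt (1 / 2) δ with hδ | hδ
  · have h := log_le_sub_one_of_pos (inv_pos.2 h₀)
    have : δ⁻¹ - 1 ≤ 2 * (1 - δ) := by
      rw [inv_eq_one_div, div_sub_one h₀.ne', div_le_iff₀ h₀]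
      nlinarith
    nlinarith
  · nlinarith

lemma integral_inv_sqrt_cos_sq_add_sq_mul_sin_sq_le {δ : ℝ} (h₀ : 0 < δ) (h₁ : δ < 1) :
    ∫ ψ in (0 : ℝ)..π / 2, 1 / √(cos ψ ^ 2 + δ ^ 2 * sin ψ ^ 2) ≤ √2 * π * (1 + log δ⁻¹) := by
  have hπ := pi_pos
  have hpos : ∀ ψ ∈ Set.uIcc 0 (π / 2), 1 - 2 * (1 - δ) / π * ψ ≠ 0 := fun ψ hψ => by
    rw [Set.uIcc_of_le (by positivity)] at hψ
    exact (h₀.trans_le (le_one_sub_mul_of_le_pi_div_two h₁.le hψ.2)).ne'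
  have hS : Continuous fun ψ => 1 / √(cos ψ ^ 2 + δ ^ 2 * sin ψ ^ 2) :=
    continuous_const.div (by fun_prop) fun ψ => (sqrt_pos.2 (by
      nlinarith [sin_sq_add_cos_sq ψ, mul_nonneg (sq_nonneg (cos ψ)) (by nlinarith : 0 ≤ 1 - δ ^ 2),
        mul_pos h₀ h₀])).ne'
  have hL : ContinuousOn (fun ψ => √2 / (1 - 2 * (1 - δ) / π * ψ)) (Set.uIcc 0 (π / 2)) :=
    continuousOn_const.div (by fun_prop) hpos
  calc ∫ ψ in (0 : ℝ)..π / 2, 1 / √(cos ψ ^ 2 + δ ^ 2 * sin ψ ^ 2)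
      ≤ ∫ ψ in (0 : ℝ)..π / 2, √2 / (1 - 2 * (1 - δ) / π * ψ) :=
        integral_mono_on (by positivity) (hS.intervalIntegrable _ _) hL.intervalIntegrable
          fun ψ hψ => one_div_sqrt_cos_sq_add_sq_mul_sin_sq_le h₀ h₁.le hψ.1 hψ.2
    _ = √2 * (π / (2 * (1 - δ)) * log δ⁻¹) := by
        simp only [div_eq_mul_inv √2, intervalIntegral.integral_const_mul]
        have hend : 1 - 2 * (1 - δ) / π * (π / 2) = δ := by field_simp; ring
        rw [integral_inv_one_sub_mul (div_pos (by linarith) hπ).ne' (by rwa [hend]), hend, inv_div]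
    _ ≤ √2 * π * (1 + log δ⁻¹) := by
        rw [mul_assoc]
        refine mul_le_mul_of_nonneg_left ?_ (sqrt_nonneg 2)
        rw [div_mul_eq_mul_div, div_le_iff₀ (by linarith)]
        nlinarith [log_inv_le_two_mul_one_sub_mul h₀ h₁]

lemma one_sub_mul_sin_sq_eq {a : ℝ} (ha : 1 + a ≠ 0) (ψ : ℝ) :
    1 - 4 * a / (1 + a) ^ 2 * sin ψ ^ 2 = cos ψ ^ 2 + ((1 - a) / (1 + a)) ^ 2 * sin ψ ^ 2 := by
  field_simp
  linear_combination (-(1 + a) ^ 2) * sin_sq_add_cos_sq ψ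

lemma integral_inv_sqrt_one_sub_mul_sin_sq_le {a : ℝ} (h₀ : 0 < a) (h₁ : a < 1) :
    ∫ ψ in (0 : ℝ)..π / 2, 1 / √(1 - 4 * a / (1 + a) ^ 2 * sin ψ ^ 2)
      ≤ 2 * √2 * π * (1 + |log (1 - a)|) := by
  have h1a : 0 < 1 + a := by linarith
  have hδ₀ : 0 < (1 - a) / (1 + a) := div_pos (by linarith) h1a
  have hδ₁ : (1 - a) / (1 + a) < 1 := (div_lt_one h1a).2 (by linarith)
  have hlog : log ((1 - a) / (1 + a))⁻¹ ≤ 1 + 2 * |log (1 - a)| := by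
    rw [inv_div, log_div h1a.ne' (by linarith)]
    have : log (1 + a) ≤ 1 := (log_le_sub_one_of_pos h1a).trans (by linarith)
    linarith [neg_le_abs (log (1 - a)), abs_nonneg (log (1 - a))]
  simp only [one_sub_mul_sin_sq_eq h1a.ne']
  refine (integral_inv_sqrt_cos_sq_add_sq_mul_sin_sq_le hδ₀ hδ₁).trans ?_
  have := pi_pos
  nlinarith [sqrt_nonneg 2, mul_nonneg (sqrt_nonneg 2) this.le]

/-- The circle average of `e^{t-s}/|1 - e^{(t-s)-iσ}|` for `t < s` equals
`(e^{t-s}/(1+e^{t-s})) (2/π) K(k)` with `k² = 4e^{t-s}/(1+e^{t-s})²`, `K` being the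
complete elliptic integral of the first kind, and is bounded by
`C (e^{t-s}/(1+e^{t-s})) (1 + |log(1 - e^{t-s})|)` for a universal constant `C`. -/
theorem stmt9 : ∃ C : ℝ, 0 < C ∧ ∀ t s : ℝ, t < s →
    ((1/(2*π)) * ∫ σ in (0:ℝ)..(2*π),
        Real.exp (t-s) / ‖1 - Complex.exp (((t-s : ℝ) : ℂ) - Complex.I * σ)‖
      = (Real.exp (t-s) / (1 + Real.exp (t-s))) * (2/π) *
        ∫ ψ in (0:ℝ)..(π/2),
          1 / Real.sqrt (1 - (4 * Real.exp (t-s) / (1 + Real.exp (t-s))^2)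
            * (Real.sin ψ)^2)) ∧
    (1/(2*π)) * (∫ σ in (0:ℝ)..(2*π),
        Real.exp (t-s) / ‖1 - Complex.exp (((t-s : ℝ) : ℂ) - Complex.I * σ)‖)
      ≤ C * (Real.exp (t-s) / (1 + Real.exp (t-s)))
          * (1 + |Real.log (1 - Real.exp (t-s))|) := by
  refine ⟨6, by norm_num, fun t s hts => ?_⟩
  have h₀ : 0 < exp (t - s) := exp_pos _
  have h₁ : exp (t - s) < 1 := exp_lt_one_iff.2 (by linarith)
  have hid : (1 / (2 * π)) * ∫ σ in (0 : ℝ)..2 * π,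
        exp (t - s) / ‖1 - Complex.exp (((t - s : ℝ) : ℂ) - Complex.I * σ)‖
      = exp (t - s) / (1 + exp (t - s)) * (2 / π) * ∫ ψ in (0 : ℝ)..π / 2,
          1 / √(1 - 4 * exp (t - s) / (1 + exp (t - s)) ^ 2 * sin ψ ^ 2) := by
    simp only [norm_one_sub_exp_ofReal_sub_I_mul]
    rw [integral_div_sqrt_one_add_sq_sub_two_mul_cos h₀.le h₁.ne]
    field_simp
    ring
  refine ⟨hid, hid ▸ ?_⟩
  calc exp (t - s) / (1 + exp (t - s)) * (2 / π) * ∫ ψ in (0 : ℝ)..π / 2,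
          1 / √(1 - 4 * exp (t - s) / (1 + exp (t - s)) ^ 2 * sin ψ ^ 2)
      ≤ exp (t - s) / (1 + exp (t - s)) * (2 / π) * (2 * √2 * π * (1 + |log (1 - exp (t - s))|)) :=
        mul_le_mul_of_nonneg_left (integral_inv_sqrt_one_sub_mul_sin_sq_le h₀ h₁) (by positivity)
    _ = 4 * √2 * (exp (t - s) / (1 + exp (t - s))) * (1 + |log (1 - exp (t - s))|) := by
        field_simp
        norm_num
    _ ≤ 6 * (exp (t - s) / (1 + exp (t - s))) * (1 + |log (1 - exp (t - s))|) := by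
        have : 4 * √2 ≤ 6 := by linarith [sqrt_two_lt_three_halves]
        gcongr
end
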